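/- In the combinatorial reformulation of Lemma 3.4: for words ξ, η in the language of a λ-synchronizing subshift Λ, the follower sets satisfy Γ_*^+(ξ) = Γ_*^+(η) if and only if ι^{p-q}(V_{t(ξ)}^p) = V_{t(η)}^q, where p = |ξ| ≤ q = |η|, V_{t(ξ)}^p is the set of terminal vertices in V_p of paths labeled ξ in 𝔏^{λ(Λ)}, and ι^{p-q}(V_{t(ξ)}^p) = {v ∈ V_q : ι^{q-p}(v) ∈ V_{t(ξ)}^p}. -/

import Mathlib

open scoped Classical

/-- The language of a subshift over alphabet `A`: nonempty, factorial
(closed under subwords) and extendable on both sides. -/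
structure ShiftLang (A : Type*) where
  L : Set (List A)
  nil_mem : [] ∈ L
  factor : ∀ u v w : List A, u ++ v ++ w ∈ L → v ∈ L
  ext_left : ∀ w ∈ L, ∃ a : A, (a :: w) ∈ L
  ext_right : ∀ w ∈ L, ∃ a : A, (w ++ [a]) ∈ L

namespace ShiftLang

variable {A : Type*} (Λ : ShiftLang A)

/-- Admissible words of length `l`. -/
def B (l : ℕ) : Set (List A) := {w | w ∈ Λ.L ∧ w.length = l}

/-- `Γ_l^-(μ)`: admissible words `ν` of length `l` with `νμ` admissible. -/
def Γminus (l : ℕ) (μ : List A) : Set (List A) := {ν | ν ∈ Λ.B l ∧ ν ++ μ ∈ Λ.L}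

/-- `Γ_*^+(μ)`: followers of `μ`. -/
def Γplus (μ : List A) : Set (List A) := {ω | μ ++ ω ∈ Λ.L}

/-- `S_l(Λ)`: the set of `l`-synchronizing words. -/
def Sync (l : ℕ) : Set (List A) :=
  {μ | μ ∈ Λ.L ∧ ∀ ω ∈ Λ.Γplus μ, Λ.Γminus l μ = Λ.Γminus l (μ ++ ω)}

/-- Irreducibility of a subshift in terms of its language. -/
def Irreducible : Prop := ∀ μ ∈ Λ.L, ∀ ν ∈ Λ.L, ∃ η, μ ++ η ++ ν ∈ Λ.L

/-- `λ`-synchronization of a subshift. -/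
def IsLambdaSync : Prop :=
  ∀ l : ℕ, ∀ η ∈ Λ.B l, ∀ k : ℕ, l ≤ k → ∃ ν ∈ Λ.Sync k, η ++ ν ∈ Λ.Sync (k - l)

/-- `μ ≻ ν` : there is `η` with `Γ_*^+(ν) = Γ_*^+(μην)`. -/
def Succ (μ ν : List A) : Prop := ∃ η, Λ.Γplus ν = Λ.Γplus (μ ++ η ++ ν)

/-- Synchronizing transitivity. -/
def SyncTransitive : Prop := ∀ μ ∈ Λ.L, ∀ ν ∈ Λ.L, Λ.Succ μ ν ∧ Λ.Succ ν μ

/-- The right one-sided shift space `X_Λ`. -/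
def X : Set (ℕ → A) := {x | ∀ n : ℕ, (List.ofFn fun i : Fin n => x i) ∈ Λ.L}

end ShiftLang

/-- A (left-resolving–free) `λ`-graph system: a labeled Bratteli diagram with `ι`-maps. -/
structure LGS (A : Type*) where
  V : ℕ → Type
  edge : ∀ l : ℕ, V l → A → V (l + 1) → Prop
  ι : ∀ l : ℕ, V (l + 1) → V l
  ι_surj : ∀ l, Function.Surjective (ι l)
  exists_succ : ∀ l (v : V l), ∃ a u, edge l v a u
  exists_pred : ∀ l (u : V (l + 1)), ∃ a v, edge l v a u
  local_prop : ∀ l (u : V l) (v : V (l + 2)) (a : A),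
    (∃ w, edge (l + 1) w a v ∧ ι l w = u) ↔ edge l u a (ι (l + 1) v)

namespace LGS

variable {A : Type*} (G : LGS A)

/-- Labeled paths in a `λ`-graph system. -/
inductive Path : ∀ {l m : ℕ}, G.V l → List A → G.V m → Prop
  | nil {l : ℕ} (v : G.V l) : Path v [] v
  | cons {l m : ℕ} {v : G.V l} {a : A} {u : G.V (l + 1)} {w : List A} {x : G.V m} :
      G.edge l v a u → Path u w x → Path v (a :: w) x

/-- The word `w` leaves the vertex `v`. -/
def Leaves {l : ℕ} (v : G.V l) (w : List A) : Prop := ∃ m, ∃ u : G.V m, G.Path v w u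

/-- The vertex `v` launches the word `w`: `w` leaves `v` and no other vertex of `V_l`. -/
def Launches {l : ℕ} (v : G.V l) (w : List A) : Prop :=
  G.Leaves v w ∧ ∀ v' : G.V l, G.Leaves v' w → v' = v

/-- Left-resolving: edges with the same label have distinct terminal vertices. -/
def LeftResolving : Prop :=
  ∀ (l : ℕ) (v v' : G.V l) (a : A) (u : G.V (l + 1)), G.edge l v a u → G.edge l v' a u → v = v'

/-- The predecessor set `Γ_l^-(v)` of a vertex: words of length `l` labeling paths from `V_0` to `v`. -/
def ΓminusV {l : ℕ} (v : G.V l) : Set (List A) :=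
  {w | w.length = l ∧ ∃ v0 : G.V 0, G.Path v0 w v}

/-- Predecessor-separated: distinct vertices of `V_l` have distinct predecessor sets. -/
def PredecessorSeparated : Prop := ∀ (l : ℕ) (u v : G.V l), G.ΓminusV u = G.ΓminusV v → u = v

/-- A `λ`-synchronizing `λ`-graph system: every vertex launches some word. -/
def LambdaSynchronizing : Prop := ∀ (l : ℕ) (v : G.V l), ∃ w : List A, G.Launches v w

/-- `G` presents the subshift `Λ`: the language of `Λ` is the set of words labeling paths of `G`. -/
def Presents (Λ : ShiftLang A) : Prop :=
  ∀ w : List A, w ∈ Λ.L ↔ ∃ (l : ℕ) (v : G.V l), G.Leaves v w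

/-- Iterated `ι`-map `ι^n : V_{l+n} → V_l`. -/
def iotaPow : ∀ (n : ℕ) {l : ℕ}, G.V (l + n) → G.V l
  | 0, _, v => v
  | n + 1, l, v => iotaPow n (G.ι (l + n) v)

/-- `ι`-irreducibility of a `λ`-graph system. -/
def IotaIrreducible : Prop :=
  ∀ (l : ℕ) (v u : G.V l) (γ : List A) (t : G.V (l + γ.length)), G.Path u γ t →
    ∃ (n : ℕ) (u' : G.V (l + n)) (w : List A) (t' : G.V (l + n + γ.length)),
      G.iotaPow n u' = u ∧ G.Path v w u' ∧ G.Path u' γ t' ∧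
      G.iotaPow n (cast (congrArg G.V (Nat.add_right_comm l n γ.length)) t') = t

/-- `λ`-irreducibility of a `λ`-graph system. -/
def LambdaIrreducible : Prop :=
  ∀ (l : ℕ) (u v : G.V l), ∃ L : ℕ, ∀ w : G.V (l + L),
    G.iotaPow L w = u → ∃ γ : List A, G.Path v γ w

/-- `Γ_∞^+(v)`: infinite label sequences of infinite paths starting at `v`. -/
def GammaInf {l : ℕ} (v : G.V l) : Set (ℕ → A) :=
  {x | ∃ vs : ∀ n : ℕ, G.V (l + n), vs 0 = v ∧ ∀ n, G.edge (l + n) (vs n) (x n) (vs (n + 1))}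

/-- Condition (I): every vertex has at least two distinct infinite follower label sequences. -/
def ConditionI : Prop := ∀ (l : ℕ) (v : G.V l), ∃ x ∈ G.GammaInf v, ∃ y ∈ G.GammaInf v, x ≠ y

/-- `G` is (isomorphic to) the `λ`-synchronizing `λ`-graph system `𝔏^{λ(Λ)}` of `Λ`:
vertices of `V_l` correspond to `l`-past equivalence classes of `l`-synchronizing words
(identified via their predecessor sets), and edges are as in the canonical construction. -/
def IsLambdaSyncSystem (Λ : ShiftLang A) : Prop :=
  (∀ (l : ℕ) (v : G.V l), ∃ μ ∈ Λ.Sync l, G.ΓminusV v = Λ.Γminus l μ) ∧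
  (∀ l : ℕ, ∀ μ ∈ Λ.Sync l, ∃ v : G.V l, G.ΓminusV v = Λ.Γminus l μ) ∧
  (∀ (l : ℕ) (v : G.V l) (a : A) (u : G.V (l + 1)),
    G.edge l v a u ↔ ∃ ν ∈ Λ.Sync (l + 1), (a :: ν) ∈ Λ.L ∧
      G.ΓminusV u = Λ.Γminus (l + 1) ν ∧ G.ΓminusV v = Λ.Γminus l (a :: ν))

end LGS

/-- The partial isometry `S_w = S_{w_1} ⋯ S_{w_k}` associated with a word. -/
def sword {A R : Type*} [Monoid R] (S : A → R) (w : List A) : R := (w.map S).prod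

/-!
A vertex `v ∈ V_q` is the class of a `q`-synchronizing word `μ`, i.e. `Γ^-(v) = Γ_q^-(μ)`, and then
`Γ^-(ι^n v) = Γ_p^-(μ)`. So `η` ends at `v` iff `ημ` is admissible, and `ξ` ends at `ι^n v` iff `ξμ`
is admissible: the right-hand side says that `ξ` and `η` have the same `q`-synchronizing followers.
Conversely, by `λ`-synchronization every follower `ω` of `ξ` extends to a follower `ων` with `ων`
itself `q`-synchronizing, so agreeing on synchronizing followers forces equal follower sets.
-/

namespace ShiftLang

variable {A : Type*} (Λ : ShiftLang A)

theorem left_mem_of_append_mem {u v : List A} (h : u ++ v ∈ Λ.L) : u ∈ Λ.L :=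
  Λ.factor [] u v (by simpa using h)

theorem right_mem_of_append_mem {u v : List A} (h : u ++ v ∈ Λ.L) : v ∈ Λ.L :=
  Λ.factor u v [] (by simpa using h)

theorem mem_Γminus_iff_exists_cons_mem {m : ℕ} {w μ : List A} :
    w ∈ Λ.Γminus m μ ↔ ∃ a : A, a :: w ∈ Λ.Γminus (m + 1) μ := by
  constructor
  · rintro ⟨⟨-, hlen⟩, hwμ⟩
    obtain ⟨a, ha⟩ := Λ.ext_left _ hwμ
    exact ⟨a, ⟨⟨Λ.left_mem_of_append_mem (v := μ) ha, by simp [hlen]⟩, ha⟩⟩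
  · rintro ⟨a, ⟨-, hlen⟩, hawμ⟩
    have hwμ : w ++ μ ∈ Λ.L := Λ.right_mem_of_append_mem (u := [a]) hawμ
    exact ⟨⟨Λ.left_mem_of_append_mem hwμ, by simpa using hlen⟩, hwμ⟩

theorem Γminus_append_subset (l : ℕ) (μ ω : List A) :
    Λ.Γminus l (μ ++ ω) ⊆ Λ.Γminus l μ :=
  fun _ ⟨hw, hwμω⟩ => ⟨hw, Λ.left_mem_of_append_mem (v := ω) (by simpa using hwμω)⟩

theorem append_mem_Sync {l : ℕ} {u ν : List A} (hν : ν ∈ Λ.Sync (l + u.length))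
    (huν : u ++ ν ∈ Λ.L) : u ++ ν ∈ Λ.Sync l := by
  refine ⟨huν, fun ρ hρ => Set.Subset.antisymm ?_ (Λ.Γminus_append_subset l _ ρ)⟩
  rintro w ⟨hw, hwuν⟩
  have hνρ : ρ ∈ Λ.Γplus ν :=
    Λ.right_mem_of_append_mem (u := u) (by simpa [ShiftLang.Γplus] using hρ)
  have hwu : w ++ u ∈ Λ.Γminus (l + u.length) (ν ++ ρ) := by
    rw [← hν.2 ρ hνρ]
    exact ⟨⟨Λ.left_mem_of_append_mem (v := ν) (by simpa using hwuν), by simp [hw.2]⟩,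
      by simpa using hwuν⟩
  exact ⟨hw, by simpa using hwu.2⟩

theorem Γplus_subset_of_forall_Sync (hls : Λ.IsLambdaSync) {ξ η : List A} {k : ℕ}
    (hξk : ξ.length ≤ k) (h : ∀ μ ∈ Λ.Sync k, ξ ++ μ ∈ Λ.L → η ++ μ ∈ Λ.L) :
    Λ.Γplus ξ ⊆ Λ.Γplus η := by
  intro ω hω
  obtain ⟨ν, hν, hξων⟩ := hls _ (ξ ++ ω) ⟨hω, rfl⟩ (k + ω.length) (by rw [List.length_append]; omega)
  have hξων : ξ ++ (ω ++ ν) ∈ Λ.L := by simpa using hξων.1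
  have hων : ω ++ ν ∈ Λ.Sync k := Λ.append_mem_Sync hν (Λ.right_mem_of_append_mem hξων)
  exact Λ.left_mem_of_append_mem (v := ν) (by simpa using h _ hων hξων)

theorem Γplus_eq_of_forall_Sync (hls : Λ.IsLambdaSync) {ξ η : List A} {k : ℕ}
    (hξk : ξ.length ≤ k) (hηk : η.length ≤ k)
    (h : ∀ μ ∈ Λ.Sync k, ξ ++ μ ∈ Λ.L ↔ η ++ μ ∈ Λ.L) :
    Λ.Γplus ξ = Λ.Γplus η :=
  Set.Subset.antisymm (Λ.Γplus_subset_of_forall_Sync hls hξk fun μ hμ => (h μ hμ).1)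
    (Λ.Γplus_subset_of_forall_Sync hls hηk fun μ hμ => (h μ hμ).2)

end ShiftLang

namespace LGS

variable {A : Type*} {G : LGS A}

theorem Path.map_ι {w : List A} {l m : ℕ} {v : G.V (l + 1)} {u : G.V (m + 1)}
    (h : G.Path v w u) : G.Path (G.ι l v) w (G.ι m u) := by
  induction w generalizing l v with
  | nil => cases h; exact .nil _
  | cons a w ih =>
    cases h with
    | cons e p => exact .cons ((G.local_prop l _ _ a).1 ⟨_, e, rfl⟩) (ih p)

theorem Path.exists_lift {w : List A} {l m : ℕ} {u : G.V l} {t : G.V (m + 1)}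
    (h : G.Path u w (G.ι m t)) : ∃ u' : G.V (l + 1), G.ι l u' = u ∧ G.Path u' w t := by
  induction w generalizing l u with
  | nil => cases h; exact ⟨t, rfl, .nil t⟩
  | cons a w ih =>
    cases h with
    | cons e p =>
      obtain ⟨u'', rfl, hu''⟩ := ih p
      obtain ⟨u', hu'e, hu'ι⟩ := (G.local_prop _ u u'' a).2 e
      exact ⟨u', hu'ι, .cons hu'e hu''⟩

variable (G)

theorem exists_path_ι_iff {l : ℕ} (v : G.V (l + 1)) (w : List A) :
    (∃ v0 : G.V 0, G.Path v0 w (G.ι l v)) ↔ ∃ (a : A) (v0 : G.V 0), G.Path v0 (a :: w) v := by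
  constructor
  · rintro ⟨v0, hp⟩
    obtain ⟨u', rfl, hp'⟩ := hp.exists_lift
    obtain ⟨a, v0', he⟩ := G.exists_pred 0 u'
    exact ⟨a, v0', .cons he hp'⟩
  · rintro ⟨a, v0, hp⟩
    cases hp with
    | cons _ p => exact ⟨_, p.map_ι⟩

theorem mem_ΓminusV_ι_iff {l : ℕ} (v : G.V (l + 1)) (w : List A) :
    w ∈ G.ΓminusV (G.ι l v) ↔ ∃ a : A, a :: w ∈ G.ΓminusV v := by
  simp only [ΓminusV, Set.mem_ofPred_eq, exists_path_ι_iff, List.length_cons,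
    Nat.add_right_cancel_iff, exists_and_left]

theorem ΓminusV_ι (Λ : ShiftLang A) {l : ℕ} {v : G.V (l + 1)} {μ : List A}
    (h : G.ΓminusV v = Λ.Γminus (l + 1) μ) : G.ΓminusV (G.ι l v) = Λ.Γminus l μ := by
  ext w
  rw [mem_ΓminusV_ι_iff, Λ.mem_Γminus_iff_exists_cons_mem, h]

theorem ΓminusV_iotaPow (Λ : ShiftLang A) (n : ℕ) {l : ℕ} {v : G.V (l + n)} {μ : List A}
    (h : G.ΓminusV v = Λ.Γminus (l + n) μ) : G.ΓminusV (G.iotaPow n v) = Λ.Γminus l μ := by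
  induction n with
  | zero => exact h
  | succ n ih => exact ih (G.ΓminusV_ι Λ h)

theorem exists_path_iff_append_mem (Λ : ShiftLang A) {l : ℕ} {v : G.V l} {μ w : List A}
    (hv : G.ΓminusV v = Λ.Γminus l μ) (hw : w ∈ Λ.L) (hlen : w.length = l) :
    (∃ v0 : G.V 0, G.Path v0 w v) ↔ w ++ μ ∈ Λ.L := by
  have h : w ∈ G.ΓminusV v ↔ w ∈ Λ.Γminus l μ := by rw [hv]
  simpa [ΓminusV, ShiftLang.Γminus, ShiftLang.B, hw, hlen] using h

end LGS

theorem followerSet_eq_iff_terminalVertices_general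
    {A : Type*} (G : LGS A) (Λ : ShiftLang A)
    (hls : Λ.IsLambdaSync) (hsys : G.IsLambdaSyncSystem Λ)
    (ξ η : List A) (hξ : ξ ∈ Λ.L) (hη : η ∈ Λ.L)
    (n : ℕ) (hn : η.length = ξ.length + n) :
    Λ.Γplus ξ = Λ.Γplus η ↔
      ∀ v : G.V (ξ.length + n),
        ((∃ v0 : G.V 0, G.Path v0 η v) ↔ ∃ v0 : G.V 0, G.Path v0 ξ (G.iotaPow n v)) := by
  obtain ⟨hvert, hword, -⟩ := hsys
  have hpaths : ∀ (v : G.V (ξ.length + n)) (μ : List A),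
      G.ΓminusV v = Λ.Γminus (ξ.length + n) μ →
      (((∃ v0 : G.V 0, G.Path v0 η v) ↔ ∃ v0 : G.V 0, G.Path v0 ξ (G.iotaPow n v)) ↔
        (η ++ μ ∈ Λ.L ↔ ξ ++ μ ∈ Λ.L)) := fun v μ hv => by
    rw [G.exists_path_iff_append_mem Λ hv hη hn,
      G.exists_path_iff_append_mem Λ (G.ΓminusV_iotaPow Λ n hv) hξ rfl]
  constructor
  · intro h v
    obtain ⟨μ, -, hv⟩ := hvert _ v
    exact (hpaths v μ hv).2 (Set.ext_iff.1 h μ).symm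
  · intro h
    refine Λ.Γplus_eq_of_forall_Sync hls le_self_add hn.le fun μ hμ => ?_
    obtain ⟨v, hv⟩ := hword _ μ hμ
    exact ((hpaths v μ hv).1 (h v)).symm

/-- combinatorial form of Lemma 3.4: for words `ξ, η` in the language of a
`λ`-synchronizing subshift `Λ` with `|η| = |ξ| + n`, the follower sets satisfy
`Γ_*^+(ξ) = Γ_*^+(η)` iff `ι^{p-q}(V_{t(ξ)}^p) = V_{t(η)}^q` in `𝔏^{λ(Λ)}`, i.e. a vertex
`v ∈ V_{|η|}` is a terminal vertex of a path labeled `η` from `V_0` iff `ι^n(v)` is a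
terminal vertex of a path labeled `ξ` from `V_0`. -/
theorem followerSet_eq_iff_terminalVertices
    {A : Type*} (G : LGS A) (Λ : ShiftLang A)
    (hirr : Λ.Irreducible) (hls : Λ.IsLambdaSync) (hsys : G.IsLambdaSyncSystem Λ)
    (ξ η : List A) (hξ : ξ ∈ Λ.L) (hη : η ∈ Λ.L)
    (n : ℕ) (hn : η.length = ξ.length + n) :
    Λ.Γplus ξ = Λ.Γplus η ↔
      ∀ v : G.V (ξ.length + n),
        ((∃ v0 : G.V 0, G.Path v0 η v) ↔ ∃ v0 : G.V 0, G.Path v0 ξ (G.iotaPow n v)) :=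
  followerSet_eq_iff_terminalVertices_general G Λ hls hsys ξ η hξ hη n hn
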